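/- Soundness of BPR with respect to the base-extension semantics: if Γ;Δ ⊢*_BPR φ (where * is + or −), then Γ;Δ ⊩* φ, i.e. Γ;Δ ⊩*_B φ for every epistemically adequate base B. -/
import Mathlib


/-- Atomic propositions; the set `At` includes the units `⊥` and `⊤`. -/
inductive Atom : Type where
  | bot : Atom
  | top : Atom
  | prop : ℕ → Atom
deriving DecidableEq

/-- Formulas over `At`, built with `∧`, `∨`, `→` and co-implication `↤`. -/
inductive Formula : Type where
  | atom : Atom → Formula
  | conj : Formula → Formula → Formula
  | disj : Formula → Formula → Formula
  | impl : Formula → Formula → Formula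
  | coimpl : Formula → Formula → Formula
deriving DecidableEq

abbrev Formula.bot : Formula := .atom .bot
abbrev Formula.top : Formula := .atom .top

/-- A formula is atomic iff it is a member of `At` (including `⊥` and `⊤`). -/
def Formula.isAtomic : Formula → Prop
  | .atom _ => True
  | _ => False

/-- Polarity of a statement: proof (`pos`) or refutation (`neg`). -/
inductive Side : Type where
  | pos : Side
  | neg : Side
deriving DecidableEq
/-- Natural deduction derivations of the bilateral system `BPR`.
`Deriv Γ Δ s φ` is a deduction of `φ` as a proof (`s = pos`) or refutation
(`s = neg`) from proof assumptions among `Γ` and refutation assumptions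
(counterassumptions) among `Δ`. -/
inductive Deriv : Set Formula → Set Formula → Side → Formula → Type where
  | hypP {Γ Δ : Set Formula} {φ : Formula} (h : φ ∈ Γ) : Deriv Γ Δ .pos φ
  | hypN {Γ Δ : Set Formula} {φ : Formula} (h : φ ∈ Δ) : Deriv Γ Δ .neg φ
  -- ⊤(+) and ⊥(−) axioms
  | topP {Γ Δ} : Deriv Γ Δ .pos Formula.top
  | botN {Γ Δ} : Deriv Γ Δ .neg Formula.bot
  -- implication
  | impI {Γ Δ φ ψ} : Deriv (insert φ Γ) Δ .pos ψ → Deriv Γ Δ .pos (.impl φ ψ)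
  | impE {Γ Δ φ ψ} : Deriv Γ Δ .pos (.impl φ ψ) → Deriv Γ Δ .pos φ → Deriv Γ Δ .pos ψ
  | impIN {Γ Δ φ ψ} : Deriv Γ Δ .pos φ → Deriv Γ Δ .neg ψ → Deriv Γ Δ .neg (.impl φ ψ)
  | impE1N {Γ Δ φ ψ} : Deriv Γ Δ .neg (.impl φ ψ) → Deriv Γ Δ .pos φ
  | impE2N {Γ Δ φ ψ} : Deriv Γ Δ .neg (.impl φ ψ) → Deriv Γ Δ .neg ψ
  -- conjunction
  | andI {Γ Δ φ ψ} : Deriv Γ Δ .pos φ → Deriv Γ Δ .pos ψ → Deriv Γ Δ .pos (.conj φ ψ)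
  | andE1 {Γ Δ φ ψ} : Deriv Γ Δ .pos (.conj φ ψ) → Deriv Γ Δ .pos φ
  | andE2 {Γ Δ φ ψ} : Deriv Γ Δ .pos (.conj φ ψ) → Deriv Γ Δ .pos ψ
  | andI1N {Γ Δ φ ψ} : Deriv Γ Δ .neg φ → Deriv Γ Δ .neg (.conj φ ψ)
  | andI2N {Γ Δ φ ψ} : Deriv Γ Δ .neg ψ → Deriv Γ Δ .neg (.conj φ ψ)
  | andEN {Γ Δ φ ψ s χ} : Deriv Γ Δ .neg (.conj φ ψ) →
      Deriv Γ (insert φ Δ) s χ → Deriv Γ (insert ψ Δ) s χ → Deriv Γ Δ s χ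
  -- disjunction
  | orI1 {Γ Δ φ ψ} : Deriv Γ Δ .pos φ → Deriv Γ Δ .pos (.disj φ ψ)
  | orI2 {Γ Δ φ ψ} : Deriv Γ Δ .pos ψ → Deriv Γ Δ .pos (.disj φ ψ)
  | orE {Γ Δ φ ψ s χ} : Deriv Γ Δ .pos (.disj φ ψ) →
      Deriv (insert φ Γ) Δ s χ → Deriv (insert ψ Γ) Δ s χ → Deriv Γ Δ s χ
  | orIN {Γ Δ φ ψ} : Deriv Γ Δ .neg φ → Deriv Γ Δ .neg ψ → Deriv Γ Δ .neg (.disj φ ψ)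
  | orE1N {Γ Δ φ ψ} : Deriv Γ Δ .neg (.disj φ ψ) → Deriv Γ Δ .neg φ
  | orE2N {Γ Δ φ ψ} : Deriv Γ Δ .neg (.disj φ ψ) → Deriv Γ Δ .neg ψ
  -- co-implication
  | coimpI {Γ Δ φ ψ} : Deriv Γ Δ .pos φ → Deriv Γ Δ .neg ψ → Deriv Γ Δ .pos (.coimpl φ ψ)
  | coimpE1 {Γ Δ φ ψ} : Deriv Γ Δ .pos (.coimpl φ ψ) → Deriv Γ Δ .pos φ
  | coimpE2 {Γ Δ φ ψ} : Deriv Γ Δ .pos (.coimpl φ ψ) → Deriv Γ Δ .neg ψ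
  | coimpIN {Γ Δ φ ψ} : Deriv Γ (insert ψ Δ) .neg φ → Deriv Γ Δ .neg (.coimpl φ ψ)
  | coimpEN {Γ Δ φ ψ} : Deriv Γ Δ .neg (.coimpl φ ψ) → Deriv Γ Δ .neg ψ → Deriv Γ Δ .neg φ
  -- ⊥(+) and ⊤(−): from a proof of ⊥ / refutation of ⊤, conclude any formula on either side
  | botP {Γ Δ s φ} : Deriv Γ Δ .pos Formula.bot → Deriv Γ Δ s φ
  | topN {Γ Δ s φ} : Deriv Γ Δ .neg Formula.top → Deriv Γ Δ s φ
  -- coordination rules PR(+) and PR(−)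
  | prP {Γ Δ φ ψ} : Deriv Γ Δ .pos φ → Deriv Γ Δ .neg φ → Deriv Γ Δ .pos ψ
  | prN {Γ Δ φ ψ} : Deriv Γ Δ .pos φ → Deriv Γ Δ .neg φ → Deriv Γ Δ .neg ψ

/-- A premise of an atomic rule: a set of discharged atomic proof hypotheses,
a set of discharged atomic refutation hypotheses, a polarity, and an atom. -/
structure APrem : Type where
  hypP : Set Atom
  hypN : Set Atom
  side : Side
  conc : Atom

/-- An atomic rule: finitely many premises and an atomic conclusion, concluded
either as a proof (`side = pos`) or as a refutation (`side = neg`).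
A rule with no premises is an axiom. -/
structure AtomicRule : Type where
  prems : List APrem
  side : Side
  conc : Atom

/-- A bilateral atomic system (base) is a set of atomic rules. -/
abbrev Base : Type := Set AtomicRule

/-- Atomic derivability over a base `B`, from atomic proof hypotheses `Γ` and atomic
refutation hypotheses `Δ`. -/
inductive AtDeriv (B : Base) : Set Atom → Set Atom → Side → Atom → Prop where
  | hypP {Γ Δ : Set Atom} {p : Atom} (h : p ∈ Γ) : AtDeriv B Γ Δ .pos p
  | hypN {Γ Δ : Set Atom} {p : Atom} (h : p ∈ Δ) : AtDeriv B Γ Δ .neg p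
  | app {Γ Δ : Set Atom} {r : AtomicRule} (hr : r ∈ B)
      (h : ∀ pr ∈ r.prems, AtDeriv B (Γ ∪ pr.hypP) (Δ ∪ pr.hypN) pr.side pr.conc) :
      AtDeriv B Γ Δ r.side r.conc

/-- `⊢⁺_B p` / `⊢⁻_B p`: closed atomic derivability in `B`. -/
def AtProves (B : Base) (s : Side) (p : Atom) : Prop := AtDeriv B ∅ ∅ s p

/-- `B` is logically consistent: not `⊢⁺_B ⊥` and not `⊢⁻_B ⊤`. -/
def LogConsistent (B : Base) : Prop := ¬ AtProves B .pos .bot ∧ ¬ AtProves B .neg .top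

/-- `B` is unit complete: it contains a proof axiom concluding `⊤` and a
refutation axiom concluding `⊥`. -/
def UnitComplete (B : Base) : Prop :=
  (⟨[], .pos, .top⟩ : AtomicRule) ∈ B ∧ (⟨[], .neg, .bot⟩ : AtomicRule) ∈ B

/-- `B` is epistemically consistent: for every atom `p`, it contains the rules
concluding a proof of `⊥`, resp. a refutation of `⊤`, from a proof of `p` and a
refutation of `p`. -/
def EpiConsistent (B : Base) : Prop := ∀ p : Atom,
  (⟨[⟨∅, ∅, .pos, p⟩, ⟨∅, ∅, .neg, p⟩], .pos, .bot⟩ : AtomicRule) ∈ B ∧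
  (⟨[⟨∅, ∅, .pos, p⟩, ⟨∅, ∅, .neg, p⟩], .neg, .top⟩ : AtomicRule) ∈ B

/-- `B` is epistemically adequate. -/
def Adequate (B : Base) : Prop := LogConsistent B ∧ UnitComplete B ∧ EpiConsistent B

/-- Bilateral support `⊩^±_B φ` (for epistemically adequate bases). -/
def Support (B : Base) (s : Side) (φ : Formula) : Prop :=
  match s, φ with
  | s, .atom a => AtDeriv B ∅ ∅ s a
  | .pos, .conj φ ψ => Support B .pos φ ∧ Support B .pos ψ
  | .neg, .conj φ ψ => ∀ C : Base, Adequate C → B ⊆ C → ∀ p : Atom,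
      ((∀ D : Base, Adequate D → C ⊆ D → Support D .neg φ → AtDeriv D ∅ ∅ .pos p) →
       (∀ D : Base, Adequate D → C ⊆ D → Support D .neg ψ → AtDeriv D ∅ ∅ .pos p) →
        AtDeriv C ∅ ∅ .pos p) ∧
      ((∀ D : Base, Adequate D → C ⊆ D → Support D .neg φ → AtDeriv D ∅ ∅ .neg p) →
       (∀ D : Base, Adequate D → C ⊆ D → Support D .neg ψ → AtDeriv D ∅ ∅ .neg p) →
        AtDeriv C ∅ ∅ .neg p)
  | .pos, .disj φ ψ => ∀ C : Base, Adequate C → B ⊆ C → ∀ p : Atom,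
      ((∀ D : Base, Adequate D → C ⊆ D → Support D .pos φ → AtDeriv D ∅ ∅ .pos p) →
       (∀ D : Base, Adequate D → C ⊆ D → Support D .pos ψ → AtDeriv D ∅ ∅ .pos p) →
        AtDeriv C ∅ ∅ .pos p) ∧
      ((∀ D : Base, Adequate D → C ⊆ D → Support D .pos φ → AtDeriv D ∅ ∅ .neg p) →
       (∀ D : Base, Adequate D → C ⊆ D → Support D .pos ψ → AtDeriv D ∅ ∅ .neg p) →
        AtDeriv C ∅ ∅ .neg p)
  | .neg, .disj φ ψ => Support B .neg φ ∧ Support B .neg ψ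
  | .pos, .impl φ ψ => ∀ C : Base, Adequate C → B ⊆ C → Support C .pos φ → Support C .pos ψ
  | .neg, .impl φ ψ => Support B .pos φ ∧ Support B .neg ψ
  | .pos, .coimpl φ ψ => Support B .pos φ ∧ Support B .neg ψ
  | .neg, .coimpl φ ψ => ∀ C : Base, Adequate C → B ⊆ C → Support C .neg ψ → Support C .neg φ
termination_by sizeOf φ

/-- `Γ;Δ ⊩^±_B φ`: support of `φ` from proof assumptions `Γ` and refutation
assumptions `Δ` relative to the (adequate) base `B`. For empty `Γ` and `Δ` this is
plain support; for nonempty `Γ ∪ Δ` it is given by the clauses (Inf +)/(Inf −). -/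
def SupportSeq (B : Base) (Γ Δ : Set Formula) (s : Side) (φ : Formula) : Prop :=
  (Γ = ∅ ∧ Δ = ∅ ∧ Support B s φ) ∨
  ((Γ ∪ Δ).Nonempty ∧
    ∀ C : Base, Adequate C → B ⊆ C →
      (∀ γ ∈ Γ, Support C .pos γ) → (∀ δ ∈ Δ, Support C .neg δ) → Support C s φ)

/-- `Γ;Δ ⊩^± φ`: support relative to every epistemically adequate base. -/
def Valid (Γ Δ : Set Formula) (s : Side) (φ : Formula) : Prop :=
  ∀ B : Base, Adequate B → SupportSeq B Γ Δ s φ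


/-! ### Auxiliary lemmas for soundness -/

lemma atderiv_mono {B C : Base} (h : B ⊆ C) : ∀ {Γ Δ : Set Atom} {s : Side} {p : Atom},
    AtDeriv B Γ Δ s p → AtDeriv C Γ Δ s p := by
  intro Γ Δ s p d
  induction d with
  | hypP hm => exact AtDeriv.hypP hm
  | hypN hm => exact AtDeriv.hypN hm
  | app hr _ ih => exact AtDeriv.app (h hr) ih

lemma sup_atom (B : Base) (s : Side) (a : Atom) :
    Support B s (.atom a) ↔ AtDeriv B ∅ ∅ s a := by
  cases s <;> simp [Support]

lemma sup_conj_pos (B : Base) (φ ψ : Formula) :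
    Support B .pos (.conj φ ψ) ↔ Support B .pos φ ∧ Support B .pos ψ := by
  simp [Support]

lemma sup_impl_pos (B : Base) (φ ψ : Formula) :
    Support B .pos (.impl φ ψ) ↔
      ∀ C : Base, Adequate C → B ⊆ C → Support C .pos φ → Support C .pos ψ := by
  simp [Support]

lemma sup_impl_neg (B : Base) (φ ψ : Formula) :
    Support B .neg (.impl φ ψ) ↔ Support B .pos φ ∧ Support B .neg ψ := by
  simp [Support]

lemma sup_disj_neg (B : Base) (φ ψ : Formula) :
    Support B .neg (.disj φ ψ) ↔ Support B .neg φ ∧ Support B .neg ψ := by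
  simp [Support]

lemma sup_coimpl_pos (B : Base) (φ ψ : Formula) :
    Support B .pos (.coimpl φ ψ) ↔ Support B .pos φ ∧ Support B .neg ψ := by
  simp [Support]

lemma sup_coimpl_neg (B : Base) (φ ψ : Formula) :
    Support B .neg (.coimpl φ ψ) ↔
      ∀ C : Base, Adequate C → B ⊆ C → Support C .neg ψ → Support C .neg φ := by
  simp [Support]

/-- Generic form of the second-order clauses used for `⊩⁻ ∧` and `⊩⁺ ∨`. -/
def ClSem (B : Base) (P Q : Base → Prop) : Prop :=
  ∀ C : Base, Adequate C → B ⊆ C → ∀ p : Atom,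
    ((∀ D : Base, Adequate D → C ⊆ D → P D → AtDeriv D ∅ ∅ .pos p) →
     (∀ D : Base, Adequate D → C ⊆ D → Q D → AtDeriv D ∅ ∅ .pos p) →
      AtDeriv C ∅ ∅ .pos p) ∧
    ((∀ D : Base, Adequate D → C ⊆ D → P D → AtDeriv D ∅ ∅ .neg p) →
     (∀ D : Base, Adequate D → C ⊆ D → Q D → AtDeriv D ∅ ∅ .neg p) →
      AtDeriv C ∅ ∅ .neg p)

lemma sup_conj_neg (B : Base) (φ ψ : Formula) :
    Support B .neg (.conj φ ψ) ↔
      ClSem B (fun D => Support D .neg φ) (fun D => Support D .neg ψ) := by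
  simp only [Support, ClSem]

lemma sup_disj_pos (B : Base) (φ ψ : Formula) :
    Support B .pos (.disj φ ψ) ↔
      ClSem B (fun D => Support D .pos φ) (fun D => Support D .pos ψ) := by
  simp only [Support, ClSem]

lemma clsem_mono {P Q : Base → Prop} {B C : Base} (h : B ⊆ C) (hcl : ClSem B P Q) :
    ClSem C P Q :=
  fun D hD hCD => hcl D hD (h.trans hCD)

lemma sup_mono : ∀ (φ : Formula) (s : Side) ⦃B C : Base⦄, B ⊆ C →
    Support B s φ → Support C s φ := by
  intro φ
  induction φ with
  | atom a =>
    intro s B C h hs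
    rw [sup_atom] at hs ⊢
    exact atderiv_mono h hs
  | conj φ ψ ihφ ihψ =>
    intro s B C h hs
    cases s with
    | pos =>
      rw [sup_conj_pos] at hs ⊢
      exact ⟨ihφ _ h hs.1, ihψ _ h hs.2⟩
    | neg =>
      rw [sup_conj_neg] at hs ⊢
      exact clsem_mono h hs
  | disj φ ψ ihφ ihψ =>
    intro s B C h hs
    cases s with
    | pos =>
      rw [sup_disj_pos] at hs ⊢
      exact clsem_mono h hs
    | neg =>
      rw [sup_disj_neg] at hs ⊢
      exact ⟨ihφ _ h hs.1, ihψ _ h hs.2⟩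
  | impl φ ψ ihφ ihψ =>
    intro s B C h hs
    cases s with
    | pos =>
      rw [sup_impl_pos] at hs ⊢
      exact fun D hD hCD => hs D hD (h.trans hCD)
    | neg =>
      rw [sup_impl_neg] at hs ⊢
      exact ⟨ihφ _ h hs.1, ihψ _ h hs.2⟩
  | coimpl φ ψ ihφ ihψ =>
    intro s B C h hs
    cases s with
    | pos =>
      rw [sup_coimpl_pos] at hs ⊢
      exact ⟨ihφ _ h hs.1, ihψ _ h hs.2⟩
    | neg =>
      rw [sup_coimpl_neg] at hs ⊢
      exact fun D hD hCD => hs D hD (h.trans hCD)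

/-- In an adequate base, no atom is both provable and refutable (yields `⊢⁺ ⊥`). -/
lemma atom_clash {C : Base} (hC : Adequate C) {a : Atom}
    (hp : AtDeriv C ∅ ∅ .pos a) (hn : AtDeriv C ∅ ∅ .neg a) : False := by
  apply hC.1.1
  refine AtDeriv.app (hC.2.2 a).1 ?_
  rintro pr hpr
  simp only [List.mem_cons, List.not_mem_nil, or_false] at hpr
  rcases hpr with rfl | rfl
  · simpa using hp
  · simpa using hn

/-- No formula is both supported positively and negatively in an adequate base. -/
lemma no_clash : ∀ (φ : Formula) ⦃C : Base⦄, Adequate C →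
    Support C .pos φ → Support C .neg φ → False := by
  intro φ
  induction φ with
  | atom a =>
    intro C hC hp hn
    rw [sup_atom] at hp hn
    exact atom_clash hC hp hn
  | conj φ ψ ihφ ihψ =>
    intro C hC hp hn
    rw [sup_conj_pos] at hp
    rw [sup_conj_neg] at hn
    refine hC.1.1 ((hn C hC (subset_refl C) .bot).1 ?_ ?_)
    · intro D hD hCD hnφ
      exact absurd (sup_mono φ .pos hCD hp.1) fun h => ihφ hD h hnφ
    · intro D hD hCD hnψ
      exact absurd (sup_mono ψ .pos hCD hp.2) fun h => ihψ hD h hnψ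
  | disj φ ψ ihφ ihψ =>
    intro C hC hp hn
    rw [sup_disj_pos] at hp
    rw [sup_disj_neg] at hn
    refine hC.1.1 ((hp C hC (subset_refl C) .bot).1 ?_ ?_)
    · intro D hD hCD hpφ
      exact absurd (sup_mono φ .neg hCD hn.1) fun h => ihφ hD hpφ h
    · intro D hD hCD hpψ
      exact absurd (sup_mono ψ .neg hCD hn.2) fun h => ihψ hD hpψ h
  | impl φ ψ ihφ ihψ =>
    intro C hC hp hn
    rw [sup_impl_pos] at hp
    rw [sup_impl_neg] at hn
    exact ihψ hC (hp C hC (subset_refl C) hn.1) hn.2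
  | coimpl φ ψ ihφ ihψ =>
    intro C hC hp hn
    rw [sup_coimpl_pos] at hp
    rw [sup_coimpl_neg] at hn
    exact ihφ hC hp.1 (hn C hC (subset_refl C) hp.2)

lemma clsem_trans {P Q P' Q' : Base → Prop} {C : Base} (h : ClSem C P Q)
    (hP : ∀ D : Base, Adequate D → C ⊆ D → P D → ClSem D P' Q')
    (hQ : ∀ D : Base, Adequate D → C ⊆ D → Q D → ClSem D P' Q') :
    ClSem C P' Q' := by
  intro C' hC' hCC' p
  constructor
  · intro h1 h2
    refine (h C' hC' hCC' p).1 ?_ ?_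
    · intro E hE hC'E hp
      exact ((hP E hE (hCC'.trans hC'E) hp) E hE (subset_refl E) p).1
        (fun F hF hEF => h1 F hF (hC'E.trans hEF)) (fun F hF hEF => h2 F hF (hC'E.trans hEF))
    · intro E hE hC'E hq
      exact ((hQ E hE (hCC'.trans hC'E) hq) E hE (subset_refl E) p).1
        (fun F hF hEF => h1 F hF (hC'E.trans hEF)) (fun F hF hEF => h2 F hF (hC'E.trans hEF))
  · intro h1 h2
    refine (h C' hC' hCC' p).2 ?_ ?_
    · intro E hE hC'E hp
      exact ((hP E hE (hCC'.trans hC'E) hp) E hE (subset_refl E) p).2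
        (fun F hF hEF => h1 F hF (hC'E.trans hEF)) (fun F hF hEF => h2 F hF (hC'E.trans hEF))
    · intro E hE hC'E hq
      exact ((hQ E hE (hCC'.trans hC'E) hq) E hE (subset_refl E) p).2
        (fun F hF hEF => h1 F hF (hC'E.trans hEF)) (fun F hF hEF => h2 F hF (hC'E.trans hEF))

/-- Elimination of the second-order clauses for arbitrary formulas: the key
lemma underlying the soundness of `∧E⁻` and `∨E`. -/
lemma clause_elim {P Q : Base → Prop} : ∀ (χ : Formula) (s : Side) ⦃C : Base⦄, Adequate C →
    ClSem C P Q →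
    (∀ D : Base, Adequate D → C ⊆ D → P D → Support D s χ) →
    (∀ D : Base, Adequate D → C ⊆ D → Q D → Support D s χ) →
    Support C s χ := by
  intro χ
  induction χ with
  | atom a =>
    intro s C hC hcl hP hQ
    rw [sup_atom]
    cases s with
    | pos =>
      exact (hcl C hC (subset_refl C) a).1
        (fun D hD hCD hp => (sup_atom D .pos a).mp (hP D hD hCD hp))
        (fun D hD hCD hq => (sup_atom D .pos a).mp (hQ D hD hCD hq))
    | neg =>
      exact (hcl C hC (subset_refl C) a).2
        (fun D hD hCD hp => (sup_atom D .neg a).mp (hP D hD hCD hp))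
        (fun D hD hCD hq => (sup_atom D .neg a).mp (hQ D hD hCD hq))
  | conj a b iha ihb =>
    intro s C hC hcl hP hQ
    cases s with
    | pos =>
      rw [sup_conj_pos]
      constructor
      · exact iha .pos hC hcl
          (fun D hD hCD hp => ((sup_conj_pos D a b).mp (hP D hD hCD hp)).1)
          (fun D hD hCD hq => ((sup_conj_pos D a b).mp (hQ D hD hCD hq)).1)
      · exact ihb .pos hC hcl
          (fun D hD hCD hp => ((sup_conj_pos D a b).mp (hP D hD hCD hp)).2)
          (fun D hD hCD hq => ((sup_conj_pos D a b).mp (hQ D hD hCD hq)).2)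
    | neg =>
      rw [sup_conj_neg]
      exact clsem_trans hcl
        (fun D hD hCD hp => (sup_conj_neg D a b).mp (hP D hD hCD hp))
        (fun D hD hCD hq => (sup_conj_neg D a b).mp (hQ D hD hCD hq))
  | disj a b iha ihb =>
    intro s C hC hcl hP hQ
    cases s with
    | pos =>
      rw [sup_disj_pos]
      exact clsem_trans hcl
        (fun D hD hCD hp => (sup_disj_pos D a b).mp (hP D hD hCD hp))
        (fun D hD hCD hq => (sup_disj_pos D a b).mp (hQ D hD hCD hq))
    | neg =>
      rw [sup_disj_neg]
      constructor
      · exact iha .neg hC hcl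
          (fun D hD hCD hp => ((sup_disj_neg D a b).mp (hP D hD hCD hp)).1)
          (fun D hD hCD hq => ((sup_disj_neg D a b).mp (hQ D hD hCD hq)).1)
      · exact ihb .neg hC hcl
          (fun D hD hCD hp => ((sup_disj_neg D a b).mp (hP D hD hCD hp)).2)
          (fun D hD hCD hq => ((sup_disj_neg D a b).mp (hQ D hD hCD hq)).2)
  | impl a b iha ihb =>
    intro s C hC hcl hP hQ
    cases s with
    | pos =>
      rw [sup_impl_pos]
      intro C' hC' hCC' ha
      exact ihb .pos hC' (clsem_mono hCC' hcl)
        (fun D hD hC'D hp => (sup_impl_pos D a b).mp (hP D hD (hCC'.trans hC'D) hp)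
          D hD (subset_refl D) (sup_mono a .pos hC'D ha))
        (fun D hD hC'D hq => (sup_impl_pos D a b).mp (hQ D hD (hCC'.trans hC'D) hq)
          D hD (subset_refl D) (sup_mono a .pos hC'D ha))
    | neg =>
      rw [sup_impl_neg]
      constructor
      · exact iha .pos hC hcl
          (fun D hD hCD hp => ((sup_impl_neg D a b).mp (hP D hD hCD hp)).1)
          (fun D hD hCD hq => ((sup_impl_neg D a b).mp (hQ D hD hCD hq)).1)
      · exact ihb .neg hC hcl
          (fun D hD hCD hp => ((sup_impl_neg D a b).mp (hP D hD hCD hp)).2)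
          (fun D hD hCD hq => ((sup_impl_neg D a b).mp (hQ D hD hCD hq)).2)
  | coimpl a b iha ihb =>
    intro s C hC hcl hP hQ
    cases s with
    | pos =>
      rw [sup_coimpl_pos]
      constructor
      · exact iha .pos hC hcl
          (fun D hD hCD hp => ((sup_coimpl_pos D a b).mp (hP D hD hCD hp)).1)
          (fun D hD hCD hq => ((sup_coimpl_pos D a b).mp (hQ D hD hCD hq)).1)
      · exact ihb .neg hC hcl
          (fun D hD hCD hp => ((sup_coimpl_pos D a b).mp (hP D hD hCD hp)).2)
          (fun D hD hCD hq => ((sup_coimpl_pos D a b).mp (hQ D hD hCD hq)).2)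
    | neg =>
      rw [sup_coimpl_neg]
      intro C' hC' hCC' hb
      exact iha .neg hC' (clsem_mono hCC' hcl)
        (fun D hD hC'D hp => (sup_coimpl_neg D a b).mp (hP D hD (hCC'.trans hC'D) hp)
          D hD (subset_refl D) (sup_mono b .neg hC'D hb))
        (fun D hD hC'D hq => (sup_coimpl_neg D a b).mp (hQ D hD (hCC'.trans hC'D) hq)
          D hD (subset_refl D) (sup_mono b .neg hC'D hb))

/-- Semantic consequence used in the inductive soundness argument. -/
def Sem (Γ Δ : Set Formula) (s : Side) (φ : Formula) : Prop :=
  ∀ C : Base, Adequate C → (∀ γ ∈ Γ, Support C .pos γ) → (∀ δ ∈ Δ, Support C .neg δ) →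
    Support C s φ

lemma deriv_sem {Γ Δ : Set Formula} {s : Side} {φ : Formula} (d : Deriv Γ Δ s φ) :
    Sem Γ Δ s φ := by
  induction d with
  | hypP h => exact fun C _ hΓ _ => hΓ _ h
  | hypN h => exact fun C _ _ hΔ => hΔ _ h
  | topP =>
    intro C hC _ _
    rw [sup_atom]
    exact AtDeriv.app hC.2.1.1 (by rintro pr ⟨⟩)
  | botN =>
    intro C hC _ _
    rw [sup_atom]
    exact AtDeriv.app hC.2.1.2 (by rintro pr ⟨⟩)
  | impI _ ih =>
    intro C hC hΓ hΔ
    rw [sup_impl_pos]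
    intro C' hC' hCC' hφ
    refine ih C' hC' ?_ (fun δ hδ => sup_mono _ _ hCC' (hΔ _ hδ))
    intro γ hγ
    rcases Set.mem_insert_iff.mp hγ with rfl | hγ
    · exact hφ
    · exact sup_mono _ _ hCC' (hΓ _ hγ)
  | impE _ _ ih1 ih2 =>
    intro C hC hΓ hΔ
    exact (sup_impl_pos ..).mp (ih1 C hC hΓ hΔ) C hC (subset_refl C) (ih2 C hC hΓ hΔ)
  | impIN _ _ ih1 ih2 =>
    intro C hC hΓ hΔ
    rw [sup_impl_neg]
    exact ⟨ih1 C hC hΓ hΔ, ih2 C hC hΓ hΔ⟩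
  | impE1N _ ih =>
    intro C hC hΓ hΔ
    exact ((sup_impl_neg ..).mp (ih C hC hΓ hΔ)).1
  | impE2N _ ih =>
    intro C hC hΓ hΔ
    exact ((sup_impl_neg ..).mp (ih C hC hΓ hΔ)).2
  | andI _ _ ih1 ih2 =>
    intro C hC hΓ hΔ
    rw [sup_conj_pos]
    exact ⟨ih1 C hC hΓ hΔ, ih2 C hC hΓ hΔ⟩
  | andE1 _ ih =>
    intro C hC hΓ hΔ
    exact ((sup_conj_pos ..).mp (ih C hC hΓ hΔ)).1
  | andE2 _ ih =>
    intro C hC hΓ hΔ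
    exact ((sup_conj_pos ..).mp (ih C hC hΓ hΔ)).2
  | andI1N _ ih =>
    intro C hC hΓ hΔ
    rw [sup_conj_neg]
    intro C' hC' hCC' p
    have hφn := sup_mono _ .neg hCC' (ih C hC hΓ hΔ)
    exact ⟨fun h1 _ => h1 C' hC' (subset_refl C') hφn,
           fun h1 _ => h1 C' hC' (subset_refl C') hφn⟩
  | andI2N _ ih =>
    intro C hC hΓ hΔ
    rw [sup_conj_neg]
    intro C' hC' hCC' p
    have hψn := sup_mono _ .neg hCC' (ih C hC hΓ hΔ)
    exact ⟨fun _ h2 => h2 C' hC' (subset_refl C') hψn,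
           fun _ h2 => h2 C' hC' (subset_refl C') hψn⟩
  | andEN _ _ _ ih1 ih2 ih3 =>
    intro C hC hΓ hΔ
    refine clause_elim _ _ hC ((sup_conj_neg ..).mp (ih1 C hC hΓ hΔ)) ?_ ?_
    · intro D hD hCD hφ
      refine ih2 D hD (fun γ hγ => sup_mono _ _ hCD (hΓ _ hγ)) ?_
      intro δ hδ
      rcases Set.mem_insert_iff.mp hδ with rfl | hδ
      · exact hφ
      · exact sup_mono _ _ hCD (hΔ _ hδ)
    · intro D hD hCD hψ
      refine ih3 D hD (fun γ hγ => sup_mono _ _ hCD (hΓ _ hγ)) ?_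
      intro δ hδ
      rcases Set.mem_insert_iff.mp hδ with rfl | hδ
      · exact hψ
      · exact sup_mono _ _ hCD (hΔ _ hδ)
  | orI1 _ ih =>
    intro C hC hΓ hΔ
    rw [sup_disj_pos]
    intro C' hC' hCC' p
    have hφp := sup_mono _ .pos hCC' (ih C hC hΓ hΔ)
    exact ⟨fun h1 _ => h1 C' hC' (subset_refl C') hφp,
           fun h1 _ => h1 C' hC' (subset_refl C') hφp⟩
  | orI2 _ ih =>
    intro C hC hΓ hΔ
    rw [sup_disj_pos]
    intro C' hC' hCC' p
    have hψp := sup_mono _ .pos hCC' (ih C hC hΓ hΔ)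
    exact ⟨fun _ h2 => h2 C' hC' (subset_refl C') hψp,
           fun _ h2 => h2 C' hC' (subset_refl C') hψp⟩
  | orE _ _ _ ih1 ih2 ih3 =>
    intro C hC hΓ hΔ
    refine clause_elim _ _ hC ((sup_disj_pos ..).mp (ih1 C hC hΓ hΔ)) ?_ ?_
    · intro D hD hCD hφ
      refine ih2 D hD ?_ (fun δ hδ => sup_mono _ _ hCD (hΔ _ hδ))
      intro γ hγ
      rcases Set.mem_insert_iff.mp hγ with rfl | hγ
      · exact hφ
      · exact sup_mono _ _ hCD (hΓ _ hγ)
    · intro D hD hCD hψ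
      refine ih3 D hD ?_ (fun δ hδ => sup_mono _ _ hCD (hΔ _ hδ))
      intro γ hγ
      rcases Set.mem_insert_iff.mp hγ with rfl | hγ
      · exact hψ
      · exact sup_mono _ _ hCD (hΓ _ hγ)
  | orIN _ _ ih1 ih2 =>
    intro C hC hΓ hΔ
    rw [sup_disj_neg]
    exact ⟨ih1 C hC hΓ hΔ, ih2 C hC hΓ hΔ⟩
  | orE1N _ ih =>
    intro C hC hΓ hΔ
    exact ((sup_disj_neg ..).mp (ih C hC hΓ hΔ)).1
  | orE2N _ ih =>
    intro C hC hΓ hΔ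
    exact ((sup_disj_neg ..).mp (ih C hC hΓ hΔ)).2
  | coimpI _ _ ih1 ih2 =>
    intro C hC hΓ hΔ
    rw [sup_coimpl_pos]
    exact ⟨ih1 C hC hΓ hΔ, ih2 C hC hΓ hΔ⟩
  | coimpE1 _ ih =>
    intro C hC hΓ hΔ
    exact ((sup_coimpl_pos ..).mp (ih C hC hΓ hΔ)).1
  | coimpE2 _ ih =>
    intro C hC hΓ hΔ
    exact ((sup_coimpl_pos ..).mp (ih C hC hΓ hΔ)).2
  | coimpIN _ ih =>
    intro C hC hΓ hΔ
    rw [sup_coimpl_neg]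
    intro C' hC' hCC' hψ
    refine ih C' hC' (fun γ hγ => sup_mono _ _ hCC' (hΓ _ hγ)) ?_
    intro δ hδ
    rcases Set.mem_insert_iff.mp hδ with rfl | hδ
    · exact hψ
    · exact sup_mono _ _ hCC' (hΔ _ hδ)
  | coimpEN _ _ ih1 ih2 =>
    intro C hC hΓ hΔ
    exact (sup_coimpl_neg ..).mp (ih1 C hC hΓ hΔ) C hC (subset_refl C) (ih2 C hC hΓ hΔ)
  | botP _ ih =>
    intro C hC hΓ hΔ
    exact absurd ((sup_atom ..).mp (ih C hC hΓ hΔ)) hC.1.1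
  | topN _ ih =>
    intro C hC hΓ hΔ
    exact absurd ((sup_atom ..).mp (ih C hC hΓ hΔ)) hC.1.2
  | prP _ _ ih1 ih2 =>
    intro C hC hΓ hΔ
    exact (no_clash _ hC (ih1 C hC hΓ hΔ) (ih2 C hC hΓ hΔ)).elim
  | prN _ _ ih1 ih2 =>
    intro C hC hΓ hΔ
    exact (no_clash _ hC (ih1 C hC hΓ hΔ) (ih2 C hC hΓ hΔ)).elim

/-- Soundness of `BPR` with respect to the base-extension semantics:
if `Γ;Δ ⊢*_BPR φ`, then `Γ;Δ ⊩* φ`, i.e. `Γ;Δ ⊩*_B φ` for every epistemically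
adequate base `B`. -/
theorem BPR_soundness (Γ Δ : Set Formula) (s : Side) (φ : Formula)
    (h : Nonempty (Deriv Γ Δ s φ)) : Valid Γ Δ s φ := by
  obtain ⟨d⟩ := h
  have hs := deriv_sem d
  intro B hB
  by_cases hne : (Γ ∪ Δ).Nonempty
  · exact Or.inr ⟨hne, fun C hC _ => hs C hC⟩
  · rw [Set.not_nonempty_iff_eq_empty, Set.union_empty_iff] at hne
    exact Or.inl ⟨hne.1, hne.2, hs B hB (by simp [hne.1]) (by simp [hne.2])⟩
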